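/- Weight of a sum of two monomials times a linear form: let I₁, I₂, J ⊆ [n] be pairwise disjoint subsets with J nonempty, |I₁| = n₁ and |I₂| = n₂. Then the Boolean function f : 𝔽₂ⁿ → 𝔽₂ defined by f(a) = (∏_{i ∈ I₁} a_i + ∏_{i ∈ I₂} a_i) · (∑_{j ∈ J} a_j) has Hamming weight w_H(f) = 2^{n − n₁ − 1} + 2^{n − n₂ − 1} − 2^{n − (n₁ + n₂)}. -/

import Mathlib

/-- The Hamming weight of a Boolean function. -/
def hammingWeight {n : ℕ} (f : (Fin n → ZMod 2) → ZMod 2) : ℕ :=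
  (Finset.univ.filter fun a : Fin n → ZMod 2 => f a = 1).card

/-!
Flipping one coordinate `j ∈ J` fixes both monomials and adds `1` to the linear form, so `f`
has exactly half the weight of `M₁ + M₂`, where `Mₖ a = ∏_{i ∈ Iₖ} a_i`. Since `M₁ M₂` is the
monomial over `I₁ ∪ I₂`, inclusion–exclusion gives `w(M₁ + M₂) = w(M₁) + w(M₂) - 2 w(M₁ M₂)`, and a
monomial of degree `d` has weight `2^(n - d)`.
-/

open Finset

lemma hammingWeight_eq_sum_val {n : ℕ} (f : (Fin n → ZMod 2) → ZMod 2) :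
    hammingWeight f = ∑ a, (f a).val := by
  rw [hammingWeight, card_filter]
  refine sum_congr rfl fun a _ => ?_
  generalize f a = x
  revert x
  decide

lemma hammingWeight_add_add_two_mul_hammingWeight_mul {n : ℕ}
    (f g : (Fin n → ZMod 2) → ZMod 2) :
    hammingWeight (f + g) + 2 * hammingWeight (f * g) = hammingWeight f + hammingWeight g := by
  have key : ∀ x y : ZMod 2, (x + y).val + 2 * (x * y).val = x.val + y.val := by decide
  simp only [hammingWeight_eq_sum_val, mul_sum, ← sum_add_distrib, Pi.add_apply, Pi.mul_apply,
    key]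

lemma two_mul_hammingWeight_mul_of_map_add_one {n : ℕ} (g ℓ : (Fin n → ZMod 2) → ZMod 2)
    (σ : Equiv.Perm (Fin n → ZMod 2)) (hg : ∀ a, g (σ a) = g a) (hℓ : ∀ a, ℓ (σ a) = ℓ a + 1) :
    2 * hammingWeight (g * ℓ) = hammingWeight g := by
  have key : ∀ x y : ZMod 2, (x * y).val + (x * (y + 1)).val = x.val := by decide
  calc 2 * hammingWeight (g * ℓ) = ∑ a, ((g * ℓ) a).val + ∑ a, ((g * ℓ) (σ a)).val := by
        rw [two_mul, hammingWeight_eq_sum_val]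
        exact congrArg _ (Equiv.sum_comp σ _).symm
    _ = hammingWeight g := by
        simp only [hammingWeight_eq_sum_val, ← sum_add_distrib, Pi.mul_apply, hg, hℓ, key]

lemma prod_zmod_two_eq_one_iff {ι : Type*} (s : Finset ι) (a : ι → ZMod 2) :
    ∏ i ∈ s, a i = 1 ↔ ∀ i ∈ s, a i = 1 := by
  have h : ∀ x : ZMod 2, x = 1 ↔ x ≠ 0 := by decide
  simp only [h, prod_ne_zero_iff]

lemma hammingWeight_monomial {n : ℕ} (s : Finset (Fin n)) :
    hammingWeight (fun a => ∏ i ∈ s, a i) = 2 ^ (n - #s) := by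
  have h : univ.filter (fun a : Fin n → ZMod 2 => ∏ i ∈ s, a i = 1)
      = Fintype.piFinset fun i => if i ∈ s then {1} else univ := by
    ext a
    simp only [mem_filter, mem_univ, true_and, prod_zmod_two_eq_one_iff, Fintype.mem_piFinset]
    exact forall_congr' fun i => by by_cases hi : i ∈ s <;> simp [hi]
  rw [hammingWeight, h, Fintype.card_piFinset]
  simp [apply_ite, prod_ite, filter_not, card_sdiff]

lemma prod_add_pi_single_of_notMem {ι R : Type*} [CommSemiring R] [DecidableEq ι] {s : Finset ι}
    {j : ι} (hj : j ∉ s) (a : ι → R) (x : R) :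
    ∏ i ∈ s, (a i + (Pi.single j x : ι → R) i) = ∏ i ∈ s, a i :=
  prod_congr rfl fun i hi => by simp [ne_of_mem_of_not_mem hi hj]

lemma sum_add_pi_single_of_mem {ι R : Type*} [AddCommMonoid R] [DecidableEq ι] {s : Finset ι}
    {j : ι} (hj : j ∈ s) (a : ι → R) (x : R) :
    ∑ i ∈ s, (a i + (Pi.single j x : ι → R) i) = ∑ i ∈ s, a i + x := by
  simp [sum_add_distrib, hj]

/-- for pairwise disjoint `I₁, I₂, J ⊆ [n]` with `J` nonempty,
`|I₁| = n₁`, `|I₂| = n₂`, the Boolean function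
`a ↦ (∏_{i ∈ I₁} a_i + ∏_{i ∈ I₂} a_i)(∑_{j ∈ J} a_j)` has Hamming weight
`2^{n - n₁ - 1} + 2^{n - n₂ - 1} - 2^{n - (n₁ + n₂)}`. -/
theorem weight_sum_two_monomials_times_linear {n : ℕ} (I₁ I₂ J : Finset (Fin n))
    (h12 : Disjoint I₁ I₂) (h1J : Disjoint I₁ J) (h2J : Disjoint I₂ J)
    (hJ : J.Nonempty) (n₁ n₂ : ℕ) (hn₁ : I₁.card = n₁) (hn₂ : I₂.card = n₂) :
    (hammingWeight (fun a : Fin n → ZMod 2 =>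
        ((∏ i ∈ I₁, a i) + (∏ i ∈ I₂, a i)) * (∑ j ∈ J, a j)) : ℤ) =
      2 ^ (n - n₁ - 1) + 2 ^ (n - n₂ - 1) - 2 ^ (n - (n₁ + n₂)) := by
  obtain ⟨j, hj⟩ := hJ
  let M₁ : (Fin n → ZMod 2) → ZMod 2 := fun a => ∏ i ∈ I₁, a i
  let M₂ : (Fin n → ZMod 2) → ZMod 2 := fun a => ∏ i ∈ I₂, a i
  have hhalf := two_mul_hammingWeight_mul_of_map_add_one (M₁ + M₂) (fun a => ∑ j ∈ J, a j)
    (Equiv.addRight (Pi.single j 1))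
    (fun a => by simp only [Equiv.coe_addRight, Pi.add_apply, M₁, M₂,
      prod_add_pi_single_of_notMem (disjoint_right.mp h1J hj),
      prod_add_pi_single_of_notMem (disjoint_right.mp h2J hj)])
    (fun a => by simp only [Equiv.coe_addRight, Pi.add_apply, sum_add_pi_single_of_mem hj])
  have hxor := hammingWeight_add_add_two_mul_hammingWeight_mul M₁ M₂
  have hM : M₁ * M₂ = fun a => ∏ i ∈ I₁ ∪ I₂, a i := funext fun a => (prod_union h12).symm
  rw [hM, hammingWeight_monomial, hammingWeight_monomial, hammingWeight_monomial,
    card_union_of_disjoint h12, hn₁, hn₂] at hxor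
  have hlt : n₁ + n₂ < n := by
    simpa [card_union_of_disjoint h12, hn₁, hn₂] using
      card_lt_univ_of_notMem (disjoint_right.mp (disjoint_union_left.mpr ⟨h1J, h2J⟩) hj)
  have hpow : ∀ m < n, 2 ^ (n - m) = 2 * 2 ^ (n - m - 1) := fun m hm => by
    rw [← pow_succ']
    congr 1
    omega
  rw [hpow n₁ (by omega), hpow n₂ (by omega)] at hxor
  have hw : hammingWeight ((M₁ + M₂) * fun a => ∑ j ∈ J, a j) + 2 ^ (n - (n₁ + n₂))
      = 2 ^ (n - n₁ - 1) + 2 ^ (n - n₂ - 1) := by omega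
  rw [eq_sub_iff_add_eq]
  exact_mod_cast hw
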